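/- The 16-bit population count program is correct: for any 16-bit unsigned integer s, the sequence of operations s₁ = (s & 0x5555) + ((s >> 1) & 0x5555), s₂ = (s₁ & 0x3333) + ((s₁ >> 2) & 0x3333), s₃ = (s₂ & 0x0f0f) + ((s₂ >> 4) & 0x0f0f), output = (s₃ + (s₃ >> 8)) & 0xff, computes the number of 1-bits in the binary representation of s. -/
import Mathlib

set_option maxRecDepth 100000
set_option maxHeartbeats 16000000

def prog (n : ℕ) : ℕ :=
  let s1 := (n &&& 0x5555) + ((n >>> 1) &&& 0x5555)
  let s2 := (s1 &&& 0x3333) + ((s1 >>> 2) &&& 0x3333)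
  let s3 := (s2 &&& 0x0f0f) + ((s2 >>> 4) &&& 0x0f0f)
  ((s3 + (s3 >>> 8)) &&& 0xff)

def S8 (n : ℕ) : ℕ := ∑ i ∈ Finset.range 8, if n.testBit i then 1 else 0

theorem lemA : ∀ b < 256, prog b = S8 b := by decide
theorem lemB : ∀ a < 256, prog (a*256) = S8 a := by decide
theorem lemC : ∀ a < 256, ∀ b < 256, prog (a*256+b) = prog (a*256) + prog b := by decide

/-- The number of 1-bits of a 16-bit word. -/
def popcount16 (s : BitVec 16) : ℕ :=
  ∑ i ∈ Finset.range 16, if s.toNat.testBit i then 1 else 0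

theorem prog_eq (n : ℕ) (hn : n < 65536) : prog n = popcount16 (BitVec.ofNat 16 n) := by
  have ha : n / 256 < 256 := by omega
  have hb : n % 256 < 256 := by omega
  have hsplit : n = n / 256 * 256 + n % 256 := by omega
  have h1 : prog n = S8 (n / 256) + S8 (n % 256) := by
    conv_lhs => rw [hsplit]
    rw [lemC _ ha _ hb, lemA _ hb, lemB _ ha]
  rw [h1]
  unfold popcount16
  have hto : (BitVec.ofNat 16 n).toNat = n := by
    simp [BitVec.toNat_ofNat, Nat.mod_eq_of_lt hn]
  rw [hto, show (16 : ℕ) = 8 + 8 from rfl, Finset.sum_range_add]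
  have e1 : ∀ i ∈ Finset.range 8, (if n.testBit i then 1 else 0) = (if (n % 256).testBit i then (1:ℕ) else 0) := by
    intro i hi
    simp only [Finset.mem_range] at hi
    rw [show (256:ℕ) = 2^8 from rfl, Nat.testBit_mod_two_pow, decide_eq_true hi, Bool.true_and]
  have e2 : ∀ i ∈ Finset.range 8, (if n.testBit (8+i) then 1 else 0) = (if (n / 256).testBit i then (1:ℕ) else 0) := by
    intro i _
    rw [show n / 256 = n >>> 8 from by rw [Nat.shiftRight_eq_div_pow], Nat.testBit_shiftRight]
  rw [Finset.sum_congr rfl e1, Finset.sum_congr rfl e2, Nat.add_comm]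
  rfl

/-- Correctness of the 16-bit population count program. -/
theorem population_count_correct (s : BitVec 16) :
    (let s1 := (s &&& 0x5555#16) + ((s >>> 1) &&& 0x5555#16)
     let s2 := (s1 &&& 0x3333#16) + ((s1 >>> 2) &&& 0x3333#16)
     let s3 := (s2 &&& 0x0f0f#16) + ((s2 >>> 4) &&& 0x0f0f#16)
     ((s3 + (s3 >>> 8)) &&& 0xff#16).toNat) = popcount16 s := by
  have key : ∀ s1 s2 s3 : BitVec 16,
      s1 = (s &&& 0x5555#16) + ((s >>> 1) &&& 0x5555#16) →
      s2 = (s1 &&& 0x3333#16) + ((s1 >>> 2) &&& 0x3333#16) →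
      s3 = (s2 &&& 0x0f0f#16) + ((s2 >>> 4) &&& 0x0f0f#16) →
      ((s3 + (s3 >>> 8)) &&& 0xff#16).toNat = popcount16 s := by
    intro s1 s2 s3 he1 he2 he3
    have h1 : s1.toNat = (s.toNat &&& 0x5555) + ((s.toNat >>> 1) &&& 0x5555) := by
      have a1 : s.toNat &&& 0x5555 ≤ 0x5555 := Nat.and_le_right
      have a2 : (s.toNat >>> 1) &&& 0x5555 ≤ 0x5555 := Nat.and_le_right
      rw [he1]
      simp [BitVec.toNat_add, BitVec.toNat_and, BitVec.toNat_ushiftRight]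
      omega
    have h2 : s2.toNat = (s1.toNat &&& 0x3333) + ((s1.toNat >>> 2) &&& 0x3333) := by
      have a1 : s1.toNat &&& 0x3333 ≤ 0x3333 := Nat.and_le_right
      have a2 : (s1.toNat >>> 2) &&& 0x3333 ≤ 0x3333 := Nat.and_le_right
      rw [he2]
      simp [BitVec.toNat_add, BitVec.toNat_and, BitVec.toNat_ushiftRight]
      omega
    have h3 : s3.toNat = (s2.toNat &&& 0x0f0f) + ((s2.toNat >>> 4) &&& 0x0f0f) := by
      have a1 : s2.toNat &&& 0x0f0f ≤ 0x0f0f := Nat.and_le_right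
      have a2 : (s2.toNat >>> 4) &&& 0x0f0f ≤ 0x0f0f := Nat.and_le_right
      rw [he3]
      simp [BitVec.toNat_add, BitVec.toNat_and, BitVec.toNat_ushiftRight]
      omega
    have hb3 : s3.toNat ≤ 0x1e1e := by
      have a1 : s2.toNat &&& 0x0f0f ≤ 0x0f0f := Nat.and_le_right
      have a2 : (s2.toNat >>> 4) &&& 0x0f0f ≤ 0x0f0f := Nat.and_le_right
      omega
    have h4 : ((s3 + (s3 >>> 8)) &&& 0xff#16).toNat = (s3.toNat + (s3.toNat >>> 8)) &&& 0xff := by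
      simp [BitVec.toNat_and, BitVec.toNat_add, BitVec.toNat_ushiftRight]
      have : (s3.toNat + s3.toNat >>> 8) % 65536 = s3.toNat + s3.toNat >>> 8 := by omega
      rw [this]
    rw [h4, h3, h2, h1]
    have hmain : prog s.toNat = popcount16 (BitVec.ofNat 16 s.toNat) := prog_eq s.toNat s.isLt
    rw [BitVec.ofNat_toNat, BitVec.setWidth_eq] at hmain
    exact hmain
  exact key _ _ _ rfl rfl rfl
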